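/- Fix N > 0, σ > 0, and a real m ∈ (0, N). With η(m, τ) := 2Φ(−t) + ((N−m)/m)·t·φ(t) for τ ≠ 0, where t := √m·|τ|/(2σ), the uniform marginal cost–benefit bound sup_{τ ∈ ℝ, τ ≠ 0} η(m, τ) ≤ 1 holds if and only if m ≥ N/3. Hence the continuous-relaxation Gaussian worst-case marginal benefit threshold is exactly m = N/3. -/

import Mathlib

/-- The standard normal density `φ`. -/
noncomputable def stdGaussPDF (x : ℝ) : ℝ :=
  (Real.sqrt (2 * Real.pi))⁻¹ * Real.exp (-x ^ 2 / 2)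

/-- The standard normal distribution function `Φ`. -/
noncomputable def stdGaussCDF (t : ℝ) : ℝ :=
  ∫ x in Set.Iic t, stdGaussPDF x

/-- The Gaussian limit function `f_k(t) = 2Φ(−t) + k t φ(t)`. -/
noncomputable def fG (k t : ℝ) : ℝ :=
  2 * stdGaussCDF (-t) + k * t * stdGaussPDF t

/-- The continuous-relaxation Gaussian marginal ratio
`η(m, τ) = 2Φ(−t) + ((N − m)/m) t φ(t)`, `t = √m|τ|/(2σ)`, for `τ ≠ 0`. -/
noncomputable def etaGauss (N σ : ℝ) (m τ : ℝ) : ℝ :=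
  fG ((N - m) / m) (Real.sqrt m * |τ| / (2 * σ))


/-!
Write `f_k(t) = 2Φ(−t) + k t φ(t)`, so that `η(m, τ) = f_k(t)` with `k = (N − m)/m` and `t` ranging
over `(0, ∞)` as `τ` ranges over `τ ≠ 0`. Since `φ' = −tφ`, one has `f_k(0) = 1` and
`f_k'(t) = φ(t) (k − 2 − k t²)`. For `k ≤ 2`, `f_k = f_2 + (k − 2) t φ(t)` where `f_2` is antitone,
so `f_k ≤ 1` on `t ≥ 0`; for `k > 2`, `f_k` increases strictly on `[0, √((k − 2)/k)]`, so it exceeds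
`1` there. Finally `k ≤ 2 ↔ N/3 ≤ m`.
-/

open Real MeasureTheory ProbabilityTheory Set

lemma stdGaussPDF_eq_gaussianPDFReal : stdGaussPDF = gaussianPDFReal 0 1 := by
  ext x
  simp [stdGaussPDF, gaussianPDFReal]

lemma stdGaussPDF_pos (x : ℝ) : 0 < stdGaussPDF x := by
  rw [stdGaussPDF_eq_gaussianPDFReal]
  exact gaussianPDFReal_pos 0 1 x one_ne_zero

lemma stdGaussPDF_neg (x : ℝ) : stdGaussPDF (-x) = stdGaussPDF x := by
  simp [stdGaussPDF]

lemma continuous_stdGaussPDF : Continuous stdGaussPDF := by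
  unfold stdGaussPDF
  fun_prop

lemma integrable_stdGaussPDF : Integrable stdGaussPDF := by
  rw [stdGaussPDF_eq_gaussianPDFReal]
  exact integrable_gaussianPDFReal 0 1

lemma stdGaussCDF_zero : stdGaussCDF 0 = 1 / 2 := by
  have h_symm : ∫ x in Iic (0 : ℝ), stdGaussPDF x = ∫ x in Ioi (0 : ℝ), stdGaussPDF x := by
    simpa [stdGaussPDF_neg] using integral_comp_neg_Iic (0 : ℝ) stdGaussPDF
  have h_total := intervalIntegral.integral_Iic_add_Ioi (b := (0 : ℝ))
    integrable_stdGaussPDF.integrableOn integrable_stdGaussPDF.integrableOn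
  rw [stdGaussPDF_eq_gaussianPDFReal, integral_gaussianPDFReal_eq_one 0 one_ne_zero,
    ← stdGaussPDF_eq_gaussianPDFReal] at h_total
  unfold stdGaussCDF
  linarith

lemma hasDerivAt_stdGaussCDF (t : ℝ) : HasDerivAt stdGaussCDF (stdGaussPDF t) t := by
  have h_eq : (fun s ↦ stdGaussCDF 0 + ∫ x in (0 : ℝ)..s, stdGaussPDF x) = stdGaussCDF := by
    ext s
    have := intervalIntegral.integral_Iic_sub_Iic (a := 0) (b := s)
      integrable_stdGaussPDF.integrableOn integrable_stdGaussPDF.integrableOn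
    unfold stdGaussCDF
    linarith
  rw [← h_eq]
  exact ((continuous_stdGaussPDF.integral_hasStrictDerivAt 0 t).hasDerivAt).const_add _

lemma hasDerivAt_stdGaussPDF (t : ℝ) : HasDerivAt stdGaussPDF (-t * stdGaussPDF t) t := by
  have h_exponent : HasDerivAt (fun x : ℝ ↦ -x ^ 2 / 2) (-t) t := by
    refine ((hasDerivAt_pow 2 t).neg.div_const 2).congr_deriv ?_
    ring
  refine (h_exponent.exp.const_mul (√(2 * π))⁻¹).congr_deriv ?_
  unfold stdGaussPDF
  ring

lemma hasDerivAt_fG (k t : ℝ) :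
    HasDerivAt (fG k) (stdGaussPDF t * (k - 2 - k * t ^ 2)) t := by
  have h_cdf : HasDerivAt (fun s ↦ stdGaussCDF (-s)) (-stdGaussPDF t) t := by
    have := (hasDerivAt_stdGaussCDF (-t)).comp t (hasDerivAt_neg t)
    rwa [stdGaussPDF_neg, mul_neg_one] at this
  have h := (h_cdf.const_mul 2).add (((hasDerivAt_id t).const_mul k).mul (hasDerivAt_stdGaussPDF t))
  refine h.congr_deriv ?_
  simp only [id]
  ring

lemma fG_zero (k : ℝ) : fG k 0 = 1 := by
  simp [fG, stdGaussCDF_zero]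

lemma fG_eq_fG_two_add (k t : ℝ) : fG k t = fG 2 t + (k - 2) * t * stdGaussPDF t := by
  unfold fG
  ring

lemma antitone_fG_two : Antitone (fG 2) :=
  antitone_of_hasDerivAt_nonpos (hasDerivAt_fG 2) fun t ↦ by
    dsimp only [Pi.zero_apply]
    nlinarith [stdGaussPDF_pos t, sq_nonneg t]

lemma fG_le_one_of_le_two {k t : ℝ} (hk : k ≤ 2) (ht : 0 ≤ t) : fG k t ≤ 1 := by
  have h_two : fG 2 t ≤ 1 := fG_zero 2 ▸ antitone_fG_two ht
  have h_corr : (k - 2) * t * stdGaussPDF t ≤ 0 :=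
    mul_nonpos_of_nonpos_of_nonneg (mul_nonpos_of_nonpos_of_nonneg (by linarith) ht)
      (stdGaussPDF_pos t).le
  rw [fG_eq_fG_two_add]
  linarith

lemma exists_one_lt_fG_of_two_lt {k : ℝ} (hk : 2 < k) : ∃ t, 0 < t ∧ 1 < fG k t := by
  set t₀ := √((k - 2) / k)
  have hk₀ : 0 < k := by linarith
  have ht₀ : 0 < t₀ := Real.sqrt_pos.mpr (div_pos (by linarith) hk₀)
  have h_mono : StrictMonoOn (fG k) (Icc 0 t₀) := by
    refine strictMonoOn_of_hasDerivWithinAt_pos (convex_Icc 0 t₀)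
      (fun s _ ↦ (hasDerivAt_fG k s).continuousAt.continuousWithinAt)
      (fun s _ ↦ (hasDerivAt_fG k s).hasDerivWithinAt) fun s hs ↦ ?_
    rw [interior_Icc] at hs
    have hs_sq : s ^ 2 < (k - 2) / k := by
      rw [← Real.sq_sqrt (div_pos (by linarith) hk₀).le]
      exact pow_lt_pow_left₀ hs.2 hs.1.le two_ne_zero
    have : k * s ^ 2 < k - 2 := by rwa [lt_div_iff₀ hk₀, mul_comm] at hs_sq
    exact mul_pos (stdGaussPDF_pos s) (by linarith)
  refine ⟨t₀, ht₀, fG_zero k ▸ h_mono ?_ ?_ ht₀⟩ <;> simp [ht₀.le]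

theorem forall_fG_le_one_iff (k : ℝ) : (∀ t, 0 < t → fG k t ≤ 1) ↔ k ≤ 2 := by
  refine ⟨fun h ↦ ?_, fun hk t ht ↦ fG_le_one_of_le_two hk ht.le⟩
  by_contra! hk
  obtain ⟨t, ht, h_lt⟩ := exists_one_lt_fG_of_two_lt hk
  exact (h t ht).not_gt h_lt

lemma forall_etaGauss_le_one_iff {N σ m : ℝ} (hσ : 0 < σ) (hm : 0 < m) :
    (∀ τ : ℝ, τ ≠ 0 → etaGauss N σ m τ ≤ 1) ↔ ∀ t, 0 < t → fG ((N - m) / m) t ≤ 1 := by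
  have hsm : 0 < √m := Real.sqrt_pos.mpr hm
  refine ⟨fun h t ht ↦ ?_, fun h τ hτ ↦ h _ (by positivity)⟩
  have hτ : 0 < 2 * σ * t / √m := by positivity
  have h_arg : √m * |2 * σ * t / √m| / (2 * σ) = t := by
    rw [abs_of_pos hτ]
    field_simp
  simpa [etaGauss, h_arg] using h _ hτ.ne'

theorem gaussian_rule_of_thirds_general (N σ : ℝ) (hσ : 0 < σ)
    (m : ℝ) (hm : m ∈ Set.Ioo 0 N) :
    (∀ τ : ℝ, τ ≠ 0 → etaGauss N σ m τ ≤ 1) ↔ N / 3 ≤ m := by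
  rw [forall_etaGauss_le_one_iff hσ hm.1, forall_fG_le_one_iff, div_le_iff₀ hm.1]
  constructor <;> intro h <;> linarith

/-- Exact Gaussian rule of thirds: the uniform marginal cost–benefit bound
`sup_{τ ≠ 0} η(m, τ) ≤ 1` holds if and only if `m ≥ N/3`; hence the
continuous-relaxation Gaussian WMB threshold is exactly `m = N/3`. -/
theorem gaussian_rule_of_thirds (N σ : ℝ) (hN : 0 < N) (hσ : 0 < σ)
    (m : ℝ) (hm : m ∈ Set.Ioo 0 N) :
    (∀ τ : ℝ, τ ≠ 0 → etaGauss N σ m τ ≤ 1) ↔ N / 3 ≤ m :=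
  gaussian_rule_of_thirds_general N σ hσ m hm
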